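/- In the setting of the time-varying covariance recursion with ‖M‖₂ < 1 and ‖Σ_{Z_n} − Σ_{Z_{n-1}}‖₂ ≤ ξ for all n ≥ 1, suppose each Σ_{Z_n} is a convex combination Σ_{Z_n} = Σ_{k=1}^d θ_{n,k} Σ_{z,k} with θ_n ≥ 0 and 𝟏ᵀθ_n = 1, and let Σ̄_{δ,k} be the unique symmetric solution of X = M X Mᵀ + Σ_W + L Σ_{z,k} Lᵀ for each k. Set ε := ξ ‖C‖₂² ‖L‖₂² ‖M‖₂² / (1 − ‖M‖₂²)². Then for every n ≥ 0 there exists a matrix P in the convex hull of { C Σ̄_{δ,k} Cᵀ + Σ_{z,k} : k = 1,…,d } and a symmetric matrix E with −εI ⪯ E ⪯ εI such that C Σ_{Δ_n} Cᵀ + Σ_{Z_n} = P + E; that is, C Σ_{Δ_n} Cᵀ + Σ_{Z_n} lies in the Minkowski sum of that convex hull and { E symmetric : −εI ⪯ E ⪯ εI }. -/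

import Mathlib

open Matrix
open scoped Matrix.Norms.L2Operator

/-!
Put `X n := ∑ₖ θ n k • Sδ k`. By linearity `X n` is the steady state of the recursion with the
input frozen at `SZ n`, and `C * X n * Cᵀ + SZ n` is the corresponding convex combination of the
vertices `C * Sδ k * Cᵀ + Sz k`; the error is `E := C * (SD n - X n) * Cᵀ`. Consecutive steady
states differ by the solution of the Stein equation `Y = M Y Mᵀ + L (SZ (n+1) - SZ n) Lᵀ`, hence by
at most `‖L‖² ξ / (1 - ‖M‖²)`. The deviation `D n := SD n - X n` starts at `0` and satisfies
`D (n+1) = M (D n - (X (n+1) - X n)) Mᵀ`, so `‖D n‖` never exceeds the fixed point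
`‖M‖² ‖L‖² ξ / (1 - ‖M‖²)²` of the scalar recursion `β ↦ ‖M‖² (β + ‖L‖² ξ / (1 - ‖M‖²))`.
Finally a symmetric matrix of spectral norm at most `ε` lies between `-εI` and `εI`.
-/

namespace Matrix

section Algebra

variable {ι κ α : Type*} [CommRing α]

theorem isSymm_sum_smul {β : Type*} [Fintype β] {S : β → Matrix κ κ α} (hS : ∀ k, (S k).IsSymm)
    (w : β → α) : (∑ k, w k • S k).IsSymm := by
  simp only [IsSymm, transpose_sum, transpose_smul, fun k => (hS k).eq]

variable [Fintype κ]

theorem IsSymm.mul_mul_transpose {A : Matrix κ κ α} (hA : A.IsSymm) (B : Matrix ι κ α) :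
    (B * A * Bᵀ).IsSymm := by
  simp only [IsSymm, transpose_mul, transpose_transpose, hA.eq, Matrix.mul_assoc]

theorem mul_sum_smul_mul_transpose {β : Type*} [Fintype β] (A : Matrix ι κ α) (w : β → α)
    (S : β → Matrix κ κ α) : A * (∑ k, w k • S k) * Aᵀ = ∑ k, w k • (A * S k * Aᵀ) := by
  simp only [Matrix.mul_sum, Matrix.sum_mul, Matrix.mul_smul, Matrix.smul_mul]

theorem sum_smul_eq_mul_mul_transpose_add {β : Type*} [Fintype β] [Fintype ι]
    {M W : Matrix ι ι α} {L : Matrix ι κ α} {S : β → Matrix ι ι α} {Z : β → Matrix κ κ α}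
    {w : β → α} (hw : ∑ k, w k = 1) (hS : ∀ k, S k = M * S k * Mᵀ + W + L * Z k * Lᵀ) :
    ∑ k, w k • S k = M * (∑ k, w k • S k) * Mᵀ + W + L * (∑ k, w k • Z k) * Lᵀ := by
  have hW : ∑ k, w k • W = W := by rw [← Finset.sum_smul, hw, one_smul]
  rw [mul_sum_smul_mul_transpose, mul_sum_smul_mul_transpose, ← hW, ← Finset.sum_add_distrib,
    ← Finset.sum_add_distrib]
  refine Finset.sum_congr rfl fun k _ => ?_
  conv_lhs => rw [hS k]
  simp only [smul_add]

end Algebra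

variable {ι κ : Type*} [Fintype ι] [Fintype κ] [DecidableEq ι] [DecidableEq κ]

theorem l2_opNorm_transpose (A : Matrix ι κ ℝ) : ‖Aᵀ‖ = ‖A‖ := by
  rw [← conjTranspose_eq_transpose_of_trivial, l2_opNorm_conjTranspose]

theorem l2_opNorm_mul_mul_transpose_le (A : Matrix ι κ ℝ) (Z : Matrix κ κ ℝ) :
    ‖A * Z * Aᵀ‖ ≤ ‖A‖ ^ 2 * ‖Z‖ :=
  calc ‖A * Z * Aᵀ‖ ≤ ‖A‖ * ‖Z‖ * ‖Aᵀ‖ :=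
        (l2_opNorm_mul _ _).trans (by gcongr; exact l2_opNorm_mul _ _)
    _ = ‖A‖ ^ 2 * ‖Z‖ := by rw [l2_opNorm_transpose]; ring

open scoped RealInnerProductSpace in
theorem dotProduct_mulVec_le_l2_opNorm (A : Matrix ι ι ℝ) (x : ι → ℝ) :
    x ⬝ᵥ A *ᵥ x ≤ ‖A‖ * (x ⬝ᵥ x) := by
  set v := WithLp.toLp 2 x
  set T := toEuclideanCLM (𝕜 := ℝ) A
  have hx : x ⬝ᵥ x = ‖v‖ ^ 2 := by
    rw [← real_inner_self_eq_norm_sq, EuclideanSpace.inner_toLp_toLp, star_trivial,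
      dotProduct_comm]
  rw [hx, ← inner_toEuclideanCLM A v v]
  calc ⟪v, T v⟫ ≤ ‖v‖ * ‖T v‖ := real_inner_le_norm _ _
    _ ≤ ‖v‖ * (‖A‖ * ‖v‖) := by gcongr; exact T.le_opNorm v
    _ = ‖A‖ * ‖v‖ ^ 2 := by ring

theorem posSemidef_smul_one_sub_of_l2_opNorm_le {A : Matrix ι ι ℝ} (hA : A.IsSymm) {ε : ℝ}
    (h : ‖A‖ ≤ ε) : (ε • 1 - A).PosSemidef := by
  refine PosSemidef.of_dotProduct_mulVec_nonneg ?_ fun x => ?_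
  · simpa using (isSymm_one.smul ε).sub hA
  · simp only [star_trivial, sub_mulVec, smul_mulVec, one_mulVec, dotProduct_sub, dotProduct_smul,
      smul_eq_mul, sub_nonneg]
    exact (dotProduct_mulVec_le_l2_opNorm A x).trans
      (mul_le_mul_of_nonneg_right h (dotProduct_self_star_nonneg x))

theorem posSemidef_add_smul_one_of_l2_opNorm_le {A : Matrix ι ι ℝ} (hA : A.IsSymm) {ε : ℝ}
    (h : ‖A‖ ≤ ε) : (A + ε • 1).PosSemidef := by
  simpa [sub_neg_eq_add, add_comm] using
    posSemidef_smul_one_sub_of_l2_opNorm_le hA.neg ((norm_neg A).trans_le h)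

end Matrix

section SteinRecursion

variable {ι α : Type*} [Fintype ι] [CommRing α] {M : Matrix ι ι α}

theorem isSymm_of_eq_mul_sub_mul_transpose {D Y : ℕ → Matrix ι ι α} (hD0 : D 0 = 0)
    (hD : ∀ n, D (n + 1) = M * (D n - Y n) * Mᵀ) (hY : ∀ n, (Y n).IsSymm) (n : ℕ) :
    (D n).IsSymm := by
  induction n with
  | zero => exact hD0 ▸ isSymm_zero
  | succ n ih => exact hD n ▸ (ih.sub (hY n)).mul_mul_transpose M

variable {B X S : ℕ → Matrix ι ι α}

theorem sub_succ_eq_mul_mul_transpose_add (hX : ∀ n, X n = M * X n * Mᵀ + B n) (n : ℕ) :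
    X (n + 1) - X n = M * (X (n + 1) - X n) * Mᵀ + (B (n + 1) - B n) :=
  calc X (n + 1) - X n = (M * X (n + 1) * Mᵀ + B (n + 1)) - (M * X n * Mᵀ + B n) := by
        rw [← hX, ← hX]
    _ = _ := by noncomm_ring

theorem sub_succ_eq_mul_sub_mul_transpose (hX : ∀ n, X n = M * X n * Mᵀ + B n)
    (hS : ∀ n, S (n + 1) = M * S n * Mᵀ + B (n + 1)) (n : ℕ) :
    S (n + 1) - X (n + 1) = M * (S n - X n - (X (n + 1) - X n)) * Mᵀ :=
  calc S (n + 1) - X (n + 1) = (M * S n * Mᵀ + B (n + 1)) - (M * X (n + 1) * Mᵀ + B (n + 1)) := by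
        rw [← hS, ← hX]
    _ = _ := by noncomm_ring

end SteinRecursion

section SteinEquation

variable {ι : Type*} [Fintype ι] [DecidableEq ι] {M : Matrix ι ι ℝ}

theorem l2_opNorm_le_of_eq_mul_mul_transpose_add (hM : ‖M‖ < 1) {Y R : Matrix ι ι ℝ}
    (hY : Y = M * Y * Mᵀ + R) : ‖Y‖ ≤ ‖R‖ / (1 - ‖M‖ ^ 2) := by
  have hM2 : 0 < 1 - ‖M‖ ^ 2 := by nlinarith [norm_nonneg M]
  have hle : ‖Y‖ ≤ ‖M‖ ^ 2 * ‖Y‖ + ‖R‖ :=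
    calc ‖Y‖ = ‖M * Y * Mᵀ + R‖ := congrArg _ hY
      _ ≤ ‖M‖ ^ 2 * ‖Y‖ + ‖R‖ :=
        (norm_add_le _ _).trans (add_le_add_left (l2_opNorm_mul_mul_transpose_le M Y) _)
  rw [le_div_iff₀ hM2]
  linarith

theorem eq_of_eq_mul_mul_transpose_add (hM : ‖M‖ < 1) {Y Y' R : Matrix ι ι ℝ}
    (hY : Y = M * Y * Mᵀ + R) (hY' : Y' = M * Y' * Mᵀ + R) : Y = Y' := by
  have hD : Y - Y' = M * (Y - Y') * Mᵀ + 0 :=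
    calc Y - Y' = (M * Y * Mᵀ + R) - (M * Y' * Mᵀ + R) := by rw [← hY, ← hY']
      _ = M * (Y - Y') * Mᵀ + 0 := by noncomm_ring
  have := l2_opNorm_le_of_eq_mul_mul_transpose_add hM hD
  rw [norm_zero, zero_div] at this
  exact sub_eq_zero.mp (norm_le_zero_iff.mp this)

theorem isSymm_of_eq_mul_mul_transpose_add (hM : ‖M‖ < 1) {Y R : Matrix ι ι ℝ} (hR : R.IsSymm)
    (hY : Y = M * Y * Mᵀ + R) : Y.IsSymm := by
  refine eq_of_eq_mul_mul_transpose_add hM ?_ hY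
  conv_lhs => rw [hY]
  simp only [transpose_add, transpose_mul, transpose_transpose, hR.eq, Matrix.mul_assoc]

theorem l2_opNorm_le_of_eq_mul_sub_mul_transpose (hM : ‖M‖ < 1) {D Y : ℕ → Matrix ι ι ℝ}
    {γ : ℝ} (hD0 : D 0 = 0) (hD : ∀ n, D (n + 1) = M * (D n - Y n) * Mᵀ)
    (hY : ∀ n, ‖Y n‖ ≤ γ) (n : ℕ) : ‖D n‖ ≤ ‖M‖ ^ 2 * γ / (1 - ‖M‖ ^ 2) := by
  have hM2 : 0 < 1 - ‖M‖ ^ 2 := by nlinarith [norm_nonneg M]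
  have hγ : 0 ≤ γ := (norm_nonneg _).trans (hY 0)
  have hβ : ‖M‖ ^ 2 * (‖M‖ ^ 2 * γ / (1 - ‖M‖ ^ 2) + γ) = ‖M‖ ^ 2 * γ / (1 - ‖M‖ ^ 2) := by
    field_simp; ring
  induction n with
  | zero => rw [hD0, norm_zero]; positivity
  | succ n ih =>
    calc ‖D (n + 1)‖ ≤ ‖M‖ ^ 2 * ‖D n - Y n‖ := hD n ▸ l2_opNorm_mul_mul_transpose_le M _
      _ ≤ ‖M‖ ^ 2 * (‖M‖ ^ 2 * γ / (1 - ‖M‖ ^ 2) + γ) := by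
        gcongr; exact (norm_sub_le _ _).trans (add_le_add ih (hY n))
      _ = _ := hβ

variable {B X S : ℕ → Matrix ι ι ℝ}

theorem l2_opNorm_sub_le_of_stein_recursion (hM : ‖M‖ < 1) (hX : ∀ n, X n = M * X n * Mᵀ + B n)
    (hS0 : S 0 = M * S 0 * Mᵀ + B 0) (hS : ∀ n, S (n + 1) = M * S n * Mᵀ + B (n + 1)) {δ : ℝ}
    (hB : ∀ n, ‖B (n + 1) - B n‖ ≤ δ) (n : ℕ) :
    ‖S n - X n‖ ≤ ‖M‖ ^ 2 * δ / (1 - ‖M‖ ^ 2) ^ 2 := by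
  have hstep (n : ℕ) : ‖X (n + 1) - X n‖ ≤ δ / (1 - ‖M‖ ^ 2) :=
    (l2_opNorm_le_of_eq_mul_mul_transpose_add hM (sub_succ_eq_mul_mul_transpose_add hX n)).trans
      (by gcongr; nlinarith [norm_nonneg M]; exact hB n)
  have := l2_opNorm_le_of_eq_mul_sub_mul_transpose hM (D := fun n => S n - X n)
    (sub_eq_zero.mpr (eq_of_eq_mul_mul_transpose_add hM hS0 (hX 0)))
    (sub_succ_eq_mul_sub_mul_transpose hX hS) hstep n
  rwa [mul_div_assoc', div_div, ← sq] at this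

theorem isSymm_sub_of_stein_recursion (hM : ‖M‖ < 1) (hX : ∀ n, X n = M * X n * Mᵀ + B n)
    (hS0 : S 0 = M * S 0 * Mᵀ + B 0) (hS : ∀ n, S (n + 1) = M * S n * Mᵀ + B (n + 1))
    (hB : ∀ n, (B (n + 1) - B n).IsSymm) (n : ℕ) : (S n - X n).IsSymm :=
  isSymm_of_eq_mul_sub_mul_transpose (D := fun n => S n - X n)
    (sub_eq_zero.mpr (eq_of_eq_mul_mul_transpose_add hM hS0 (hX 0)))
    (sub_succ_eq_mul_sub_mul_transpose hX hS)
    (fun n => isSymm_of_eq_mul_mul_transpose_add hM (hB n)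
      (sub_succ_eq_mul_mul_transpose_add hX n)) n

end SteinEquation

theorem time_varying_covariance_in_expanded_omega_general
    {p m d : ℕ}
    (M : Matrix (Fin p) (Fin p) ℝ) (L : Matrix (Fin p) (Fin m) ℝ)
    (C : Matrix (Fin m) (Fin p) ℝ)
    (hM : ‖M‖ < 1)
    (SW : Matrix (Fin p) (Fin p) ℝ)
    (Sz : Fin d → Matrix (Fin m) (Fin m) ℝ) (hSz : ∀ k, (Sz k)ᵀ = Sz k)
    (SZ : ℕ → Matrix (Fin m) (Fin m) ℝ)
    (θ : ℕ → Fin d → ℝ)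
    (hθ0 : ∀ n k, 0 ≤ θ n k) (hθ1 : ∀ n, ∑ k, θ n k = 1)
    (hSZ : ∀ n, SZ n = ∑ k, θ n k • Sz k)
    (ξ : ℝ) (hξ : ∀ n : ℕ, 1 ≤ n → ‖SZ n - SZ (n - 1)‖ ≤ ξ)
    (Sδ : Fin d → Matrix (Fin p) (Fin p) ℝ)
    (hSδ : ∀ k, Sδ k = M * Sδ k * Mᵀ + SW + L * Sz k * Lᵀ)
    (SD : ℕ → Matrix (Fin p) (Fin p) ℝ)
    (h0 : SD 0 = M * SD 0 * Mᵀ + SW + L * SZ 0 * Lᵀ)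
    (hrec : ∀ n : ℕ, 1 ≤ n → SD n = M * SD (n - 1) * Mᵀ + SW + L * SZ n * Lᵀ)
    (ε : ℝ) (hε : ε = ξ * ‖C‖ ^ 2 * ‖L‖ ^ 2 * ‖M‖ ^ 2 / (1 - ‖M‖ ^ 2) ^ 2) :
    ∀ n : ℕ, ∃ P ∈ convexHull ℝ
        {X : Matrix (Fin m) (Fin m) ℝ | ∃ k, X = C * Sδ k * Cᵀ + Sz k},
      ∃ E : Matrix (Fin m) (Fin m) ℝ, Eᵀ = E ∧
        (E + ε • (1 : Matrix (Fin m) (Fin m) ℝ)).PosSemidef ∧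
        (ε • (1 : Matrix (Fin m) (Fin m) ℝ) - E).PosSemidef ∧
        C * SD n * Cᵀ + SZ n = P + E := by
  intro n
  set X : ℕ → Matrix (Fin p) (Fin p) ℝ := fun j => ∑ k, θ j k • Sδ k
  set B : ℕ → Matrix (Fin p) (Fin p) ℝ := fun j => SW + L * SZ j * Lᵀ
  have hX (j : ℕ) : X j = M * X j * Mᵀ + B j := by
    simpa only [X, B, hSZ, add_assoc] using sum_smul_eq_mul_mul_transpose_add (hθ1 j) hSδ
  have hS0 : SD 0 = M * SD 0 * Mᵀ + B 0 := h0.trans (add_assoc _ _ _)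
  have hS (j : ℕ) : SD (j + 1) = M * SD j * Mᵀ + B (j + 1) := by
    simpa only [add_tsub_cancel_right, add_assoc] using hrec (j + 1) (Nat.le_add_left 1 j)
  have hB (j : ℕ) : B (j + 1) - B j = L * (SZ (j + 1) - SZ j) * Lᵀ := by
    simp only [B, add_sub_add_left_eq_sub, Matrix.mul_sub, Matrix.sub_mul]
  have hSZsymm (j : ℕ) : (SZ j).IsSymm := hSZ j ▸ isSymm_sum_smul hSz (θ j)
  have hBnorm (j : ℕ) : ‖B (j + 1) - B j‖ ≤ ‖L‖ ^ 2 * ξ :=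
    hB j ▸ (l2_opNorm_mul_mul_transpose_le _ _).trans
      (by gcongr; simpa using hξ (j + 1) (Nat.le_add_left 1 j))
  have hEsymm : (C * (SD n - X n) * Cᵀ).IsSymm :=
    (isSymm_sub_of_stein_recursion hM hX hS0 hS (fun j => hB j ▸
      ((hSZsymm _).sub (hSZsymm _)).mul_mul_transpose L) n).mul_mul_transpose C
  have hEnorm : ‖C * (SD n - X n) * Cᵀ‖ ≤ ε :=
    calc _ ≤ ‖C‖ ^ 2 * ‖SD n - X n‖ := l2_opNorm_mul_mul_transpose_le _ _
      _ ≤ ‖C‖ ^ 2 * (‖M‖ ^ 2 * (‖L‖ ^ 2 * ξ) / (1 - ‖M‖ ^ 2) ^ 2) := by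
        gcongr; exact l2_opNorm_sub_le_of_stein_recursion hM hX hS0 hS hBnorm n
      _ = ε := by rw [hε]; ring
  refine ⟨∑ k, θ n k • (C * Sδ k * Cᵀ + Sz k), ?_, C * (SD n - X n) * Cᵀ, hEsymm,
    posSemidef_add_smul_one_of_l2_opNorm_le hEsymm hEnorm,
    posSemidef_smul_one_sub_of_l2_opNorm_le hEsymm hEnorm, ?_⟩
  · exact (convex_convexHull ℝ _).sum_mem (fun k _ => hθ0 n k) (hθ1 n)
      (fun k _ => subset_convexHull ℝ _ ⟨k, rfl⟩)
  · rw [hSZ, Finset.sum_congr rfl fun k _ => smul_add _ _ _, Finset.sum_add_distrib,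
      ← mul_sum_smul_mul_transpose]
    simp only [X, Matrix.mul_sub, Matrix.sub_mul]
    abel

/-- Lemma 5 of the paper. For the time-varying observer error covariance
recursion with `‖M‖₂ < 1` and step sizes `‖Σ_{Z_n} - Σ_{Z_{n-1}}‖₂ ≤ ξ`, where each
`Σ_{Z_n}` is a convex combination of the vertices `Σ_{z,k}` (here `Sz k`) and `Σ̄_{δ,k}`
(here `Sδ k`) is the unique symmetric solution of `X = M X Mᵀ + Σ_W + L Σ_{z,k} Lᵀ`, the
matrix `C Σ_{Δ_n} Cᵀ + Σ_{Z_n}` lies in the Minkowski sum of the convex hull of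
`{C Σ̄_{δ,k} Cᵀ + Σ_{z,k}}` and `{E symmetric : -εI ⪯ E ⪯ εI}` with
`ε = ξ ‖C‖₂² ‖L‖₂² ‖M‖₂² / (1 - ‖M‖₂²)²`. Here `‖·‖` is the spectral (L2 operator) norm. -/
theorem time_varying_covariance_in_expanded_omega
    {p m d : ℕ}
    (M : Matrix (Fin p) (Fin p) ℝ) (L : Matrix (Fin p) (Fin m) ℝ)
    (C : Matrix (Fin m) (Fin p) ℝ)
    (hM : ‖M‖ < 1)
    (SW : Matrix (Fin p) (Fin p) ℝ) (hSW : SWᵀ = SW)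
    (Sz : Fin d → Matrix (Fin m) (Fin m) ℝ) (hSz : ∀ k, (Sz k)ᵀ = Sz k)
    (SZ : ℕ → Matrix (Fin m) (Fin m) ℝ)
    (θ : ℕ → Fin d → ℝ)
    (hθ0 : ∀ n k, 0 ≤ θ n k) (hθ1 : ∀ n, ∑ k, θ n k = 1)
    (hSZ : ∀ n, SZ n = ∑ k, θ n k • Sz k)
    (ξ : ℝ) (hξ : ∀ n : ℕ, 1 ≤ n → ‖SZ n - SZ (n - 1)‖ ≤ ξ)
    (Sδ : Fin d → Matrix (Fin p) (Fin p) ℝ)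
    (hSδSymm : ∀ k, (Sδ k)ᵀ = Sδ k)
    (hSδ : ∀ k, Sδ k = M * Sδ k * Mᵀ + SW + L * Sz k * Lᵀ)
    (SD : ℕ → Matrix (Fin p) (Fin p) ℝ)
    (h0 : SD 0 = M * SD 0 * Mᵀ + SW + L * SZ 0 * Lᵀ)
    (hrec : ∀ n : ℕ, 1 ≤ n → SD n = M * SD (n - 1) * Mᵀ + SW + L * SZ n * Lᵀ)
    (ε : ℝ) (hε : ε = ξ * ‖C‖ ^ 2 * ‖L‖ ^ 2 * ‖M‖ ^ 2 / (1 - ‖M‖ ^ 2) ^ 2) :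
    ∀ n : ℕ, ∃ P ∈ convexHull ℝ
        {X : Matrix (Fin m) (Fin m) ℝ | ∃ k, X = C * Sδ k * Cᵀ + Sz k},
      ∃ E : Matrix (Fin m) (Fin m) ℝ, Eᵀ = E ∧
        (E + ε • (1 : Matrix (Fin m) (Fin m) ℝ)).PosSemidef ∧
        (ε • (1 : Matrix (Fin m) (Fin m) ℝ) - E).PosSemidef ∧
        C * SD n * Cᵀ + SZ n = P + E :=
  time_varying_covariance_in_expanded_omega_general M L C hM SW Sz hSz SZ θ hθ0 hθ1 hSZ ξ hξ Sδ hSδ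
    SD h0 hrec ε hε
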